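/- Let A be a closed densely defined operator between Hilbert spaces. Then spec(A A*) \ {0} = spec(A* A) \ {0}. -/

import Mathlib

open ContinuousLinearMap in
lemma aux_isUnit_swap
    {H₁ H₂ : Type*} [NormedAddCommGroup H₁] [InnerProductSpace ℂ H₁] [CompleteSpace H₁]
    [NormedAddCommGroup H₂] [InnerProductSpace ℂ H₂] [CompleteSpace H₂]
    (A : H₁ →L[ℂ] H₂) (B : H₂ →L[ℂ] H₁) {z : ℂ} (hz : z ≠ 0)
    (h : IsUnit (algebraMap ℂ (H₂ →L[ℂ] H₂) z - A.comp B)) :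
    IsUnit (algebraMap ℂ (H₁ →L[ℂ] H₁) z - B.comp A) := by
  obtain ⟨u, hu⟩ := h
  set C : H₂ →L[ℂ] H₂ := (↑u⁻¹ : H₂ →L[ℂ] H₂) with hC
  have h1 : ∀ y : H₂, z • C y - A (B (C y)) = y := by
    intro y
    have := congrArg (fun (T : H₂ →L[ℂ] H₂) => T y) (u.mul_inv)
    simpa [hu, mul_def, Algebra.algebraMap_eq_smul_one, sub_apply, smul_apply] using this
  have h2 : ∀ y : H₂, z • C y - C (A (B y)) = y := by
    intro y
    have := congrArg (fun (T : H₂ →L[ℂ] H₂) => T y) (u.inv_mul)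
    simpa [hu, mul_def, Algebra.algebraMap_eq_smul_one, sub_apply, smul_apply, map_sub,
      map_smul] using this
  set E : H₁ →L[ℂ] H₁ := algebraMap ℂ (H₁ →L[ℂ] H₁) z - B.comp A with hE
  set D : H₁ →L[ℂ] H₁ := z⁻¹ • (1 + B.comp (C.comp A)) with hD
  have hED : E * D = 1 := by
    ext x
    have key := congrArg B (h1 (A x))
    simp only [map_sub, map_smul] at key
    simp only [mul_def, hE, hD, comp_apply, sub_apply, smul_apply, add_apply, ContinuousLinearMap.one_apply,
      Algebra.algebraMap_eq_smul_one, map_add, map_smul, map_sub, smul_add, smul_sub]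
    linear_combination (norm := (match_scalars <;> field_simp <;> ring)) z⁻¹ • key
  have hDE : D * E = 1 := by
    ext x
    have key := h2 (A x)
    simp only [mul_def, hE, hD, comp_apply, sub_apply, smul_apply, add_apply, ContinuousLinearMap.one_apply,
      Algebra.algebraMap_eq_smul_one, map_add, map_smul, map_sub, smul_add, smul_sub]
    have key2 : z • B (C (A x)) - B (C (A (B (A x)))) = B (A x) := by
      simpa [map_sub, map_smul] using congrArg B key
    linear_combination (norm := (match_scalars <;> field_simp <;> ring)) z⁻¹ • key2
  exact ⟨⟨E, D, hED, hDE⟩, rfl⟩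

open ContinuousLinearMap in
/-- `spec(AA*) \ {0} = spec(A*A) \ {0}`. -/
theorem spectrum_AAstar_eq_spectrum_AstarA_away_from_zero
    {H₁ H₂ : Type*} [NormedAddCommGroup H₁] [InnerProductSpace ℂ H₁] [CompleteSpace H₁]
    [NormedAddCommGroup H₂] [InnerProductSpace ℂ H₂] [CompleteSpace H₂]
    (A : H₁ →L[ℂ] H₂) :
    spectrum ℂ (A.comp (adjoint A)) \ {0} = spectrum ℂ ((adjoint A).comp A) \ {0} := by
  ext z
  simp only [Set.mem_diff, Set.mem_singleton_iff]
  constructor <;> rintro ⟨hm, hz⟩ <;> refine ⟨?_, hz⟩ <;>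
    rw [spectrum.mem_iff] at hm ⊢ <;> intro h <;>
    exact hm (aux_isUnit_swap _ _ hz h)
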